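/- Let G(u,t) = ∫_u^t exp(-∫_u^v k(s) ds) dv where k is continuous with m_k < k(t) ≤ M_k and m_k > 0. Then for any α > 0, J(α,0,t) = ∫_0^t G(u,t)^α exp(-α ∫_u^t k(s) ds) du ≤ 1/(α m_k^(α+1)) for all t ≥ 0. -/

import Mathlib

/-!
For `0 ≤ u ≤ t` the lower bound `k ≥ m_k` gives `G(u,t) ≤ ∫_u^t e^{-m_k (v-u)} dv ≤ 1/m_k` and
`exp(-α ∫_u^t k) ≤ e^{-α m_k (t-u)}`, so the integrand of `J` is at most
`m_k^{-α} e^{-α m_k (t-u)}`, whose integral over `[0,t]` is at most `1/(α m_k^{α+1})`.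
-/

open Real MeasureTheory

theorem integral_exp_mul_sub {c : ℝ} (hc : c ≠ 0) (a b d : ℝ) :
    ∫ x in a..b, exp (c * (x - d)) = (exp (c * (b - d)) - exp (c * (a - d))) / c := by
  simp_rw [mul_sub]
  rw [intervalIntegral.integral_comp_mul_sub (f := exp) hc, integral_exp, smul_eq_mul]
  ring

theorem integral_exp_mul_sub_right_le {c : ℝ} (hc : 0 < c) (a b : ℝ) :
    ∫ x in a..b, exp (c * (x - b)) ≤ 1 / c := by
  rw [integral_exp_mul_sub hc.ne', sub_self, mul_zero, exp_zero]
  gcongr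
  linarith [exp_pos (c * (a - b))]

theorem integral_exp_neg_mul_sub_left_le {c : ℝ} (hc : 0 < c) (a b : ℝ) :
    ∫ x in a..b, exp (-c * (x - a)) ≤ 1 / c := by
  rw [integral_exp_mul_sub (neg_ne_zero.2 hc.ne'), sub_self, mul_zero, exp_zero,
    div_neg, ← neg_div, neg_sub]
  gcongr
  linarith [exp_pos (-c * (b - a))]

theorem mul_sub_le_integral_of_le {k : ℝ → ℝ} {m a b : ℝ} (hab : a ≤ b)
    (hk : IntervalIntegrable k volume a b) (hm : ∀ s ∈ Set.Icc a b, m ≤ k s) :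
    m * (b - a) ≤ ∫ s in a..b, k s := by
  simpa [mul_comm] using intervalIntegral.integral_mono_on hab intervalIntegrable_const hk hm

/-- No integrability of `f` is required: otherwise its integral is `0`. -/
theorem integral_le_of_norm_le {f g : ℝ → ℝ} {a b : ℝ} (hab : a ≤ b)
    (h : ∀ x ∈ Set.Ioc a b, ‖f x‖ ≤ g x) (hg : IntervalIntegrable g volume a b) :
    ∫ x in a..b, f x ≤ ∫ x in a..b, g x :=
  (Real.le_norm_self _).trans <|
    intervalIntegral.norm_integral_le_of_norm_le hab (Filter.Eventually.of_forall h) hg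

theorem integral_exp_neg_integral_le {k : ℝ → ℝ} {m a b : ℝ} (hm : 0 < m) (hab : a ≤ b)
    (hk : IntervalIntegrable k volume a b) (hmk : ∀ s ∈ Set.Icc a b, m ≤ k s) :
    ∫ v in a..b, exp (-∫ s in a..v, k s) ≤ 1 / m := by
  refine (integral_le_of_norm_le hab (g := fun v => exp (-m * (v - a))) (fun v hv => ?_)
    ((by fun_prop : Continuous _).intervalIntegrable a b)).trans
    (integral_exp_neg_mul_sub_left_le hm a b)
  have hkv : m * (v - a) ≤ ∫ s in a..v, k s :=
    mul_sub_le_integral_of_le hv.1.le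
      (hk.mono_set (Set.uIcc_subset_uIcc Set.left_mem_uIcc (Set.mem_uIcc_of_le hv.1.le hv.2)))
      (fun s hs => hmk s ⟨hs.1, hs.2.trans hv.2⟩)
  rw [Real.norm_of_nonneg (exp_pos _).le, exp_le_exp]
  linarith

/-- With `G(u,t) = ∫_u^t exp(-∫_u^v k(s) ds) dv` and `k` continuous, `0 < m_k < k ≤ M_k`,
for any `α > 0`,
`J(α,0,t) = ∫_0^t G(u,t)^α exp(-α ∫_u^t k(s) ds) du ≤ 1/(α m_k^(α+1))` for all `t ≥ 0`. -/
theorem stmt1 (k : ℝ → ℝ) (mk Mk : ℝ) (hk : Continuous k) (hmk : 0 < mk)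
    (hbound : ∀ t ≥ (0:ℝ), mk < k t ∧ k t ≤ Mk)
    (G : ℝ → ℝ → ℝ)
    (hG : ∀ u t : ℝ, G u t = ∫ v in u..t, Real.exp (-∫ s in u..v, k s))
    (α : ℝ) (hα : 0 < α) (t : ℝ) (ht : 0 ≤ t) :
    (∫ u in (0:ℝ)..t, G u t ^ α * Real.exp (-α * ∫ s in u..t, k s))
      ≤ 1 / (α * mk ^ (α + 1)) := by
  have hmk_le : ∀ u ≥ (0 : ℝ), ∀ s ∈ Set.Icc u t, mk ≤ k s :=
    fun u hu s hs => (hbound s (hu.trans hs.1)).1.le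
  have hintegrand : ∀ u ∈ Set.Ioc 0 t,
      ‖G u t ^ α * exp (-α * ∫ s in u..t, k s)‖ ≤ (1 / mk) ^ α * exp (α * mk * (u - t)) := by
    intro u ⟨hu, hut⟩
    have hG_nonneg : 0 ≤ G u t :=
      hG u t ▸ intervalIntegral.integral_nonneg hut fun v _ => (exp_pos _).le
    have hG_le : G u t ≤ 1 / mk :=
      hG u t ▸ integral_exp_neg_integral_le hmk hut (hk.intervalIntegrable u t) (hmk_le u hu.le)
    have hk_int : mk * (t - u) ≤ ∫ s in u..t, k s :=
      mul_sub_le_integral_of_le hut (hk.intervalIntegrable u t) (hmk_le u hu.le)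
    rw [Real.norm_of_nonneg (by positivity)]
    exact mul_le_mul (by gcongr) (exp_le_exp.2 (by nlinarith)) (exp_pos _).le (by positivity)
  calc (∫ u in (0:ℝ)..t, G u t ^ α * exp (-α * ∫ s in u..t, k s))
      ≤ ∫ u in (0:ℝ)..t, (1 / mk) ^ α * exp (α * mk * (u - t)) :=
        integral_le_of_norm_le ht hintegrand ((by fun_prop : Continuous _).intervalIntegrable 0 t)
    _ ≤ (1 / mk) ^ α * (1 / (α * mk)) := by
        rw [intervalIntegral.integral_const_mul]
        gcongr
        exact integral_exp_mul_sub_right_le (by positivity) 0 t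
    _ = 1 / (α * mk ^ (α + 1)) := by
        rw [div_rpow zero_le_one hmk.le, one_rpow, rpow_add_one hmk.ne']
        field_simp
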